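/- arXiv:2405.17646 — 3 statements merged into one kernel-verified Lean document; each statement's English description precedes it below -/
import Mathlib

section
/- Let P be a finite poset and define gap(P) = c(P) + |P| - (max(P) + min(P) + edges(P)), where c(P) is the number of maximal chains, max(P) the number of maximal elements, min(P) the number of minimal elements, and edges(P) the number of cover relations. Let α be a minimal, non-maximal element of P, and let β_1,...,β_s be the elements covering α that cover at least two elements of P. Then gap(P) - gap(P \ α) = Σ_{i=1}^s (uc(β_i) - 1), where uc(v) denotes the number of saturated chains from v up to a maximal element of P. -/
open Classical

variable {α : Type*}

/-- A saturated chain from `v` up to a maximal element: a list `v = v₀ ⋖ v₁ ⋖ … ⋖ vₖ`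
with `vₖ` maximal. -/
def UpChain [PartialOrder α] (v : α) (l : List α) : Prop :=
  l.Chain' (· ⋖ ·) ∧ l.head? = some v ∧ ∃ m, l.getLast? = some m ∧ IsMax m

/-- A saturated chain from a minimal element up to `v`. -/
def DownChain [PartialOrder α] (v : α) (l : List α) : Prop :=
  l.Chain' (· ⋖ ·) ∧ (∃ m, l.head? = some m ∧ IsMin m) ∧ l.getLast? = some v

/-- `uc v` : the number of saturated chains from `v` up to a maximal element. -/
noncomputable def uc [PartialOrder α] (v : α) : ℕ := Nat.card {l : List α // UpChain v l}

/-- `dc v` : the number of saturated chains from `v` down to a minimal element. -/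
noncomputable def dc [PartialOrder α] (v : α) : ℕ := Nat.card {l : List α // DownChain v l}

/-- A maximal chain: a saturated chain from a minimal element to a maximal element. -/
def IsMaxChainList [PartialOrder α] (l : List α) : Prop :=
  l.Chain' (· ⋖ ·) ∧ (∃ m, l.head? = some m ∧ IsMin m) ∧ ∃ m, l.getLast? = some m ∧ IsMax m

/-- `c(P)`: the number of maximal chains. -/
noncomputable def numMaxChains (α : Type*) [PartialOrder α] : ℕ :=
  Nat.card {l : List α // IsMaxChainList l}

/-- `max(P)`: the number of maximal elements. -/
noncomputable def numMax (α : Type*) [PartialOrder α] : ℕ := Nat.card {v : α // IsMax v}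

/-- `min(P)`: the number of minimal elements. -/
noncomputable def numMin (α : Type*) [PartialOrder α] : ℕ := Nat.card {v : α // IsMin v}

/-- `edges(P)`: the number of cover relations (edges of the Hasse diagram). -/
noncomputable def numEdges (α : Type*) [PartialOrder α] : ℕ :=
  Nat.card {p : α × α // p.1 ⋖ p.2}

/-- `gap(P) = c(P) + |P| - (max(P) + min(P) + edges(P))`. -/
noncomputable def gap (α : Type*) [PartialOrder α] : ℤ :=
  (numMaxChains α : ℤ) + Nat.card α - ((numMax α : ℤ) + numMin α + numEdges α)

/-- The crossing number `(uc(v)-1)(dc(v)-1)` of `v`. -/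
noncomputable def crossingNumber [PartialOrder α] (v : α) : ℕ := (uc v - 1) * (dc v - 1)

/-- `c` is the center of an X-shaped subposet: there are `a, b < c < d, e`
with `a ∥ b` and `d ∥ e`. -/
def IsXCenter [PartialOrder α] (c : α) : Prop :=
  ∃ a b d e : α, a < c ∧ b < c ∧ c < d ∧ c < e ∧
    ¬ a ≤ b ∧ ¬ b ≤ a ∧ ¬ d ≤ e ∧ ¬ e ≤ d

/-- `P` contains an X-shaped subposet. -/
def HasX (α : Type*) [PartialOrder α] : Prop := ∃ c : α, IsXCenter c

/-!
Every maximal chain starts at a minimal element, so `c(P) = ∑_{m minimal} uc(m)`, and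
`uc(a) = ∑_{a ⋖ b} uc(b)` because `a` is not maximal. Since `a` is minimal, `P \ a` is an up-set
of `P`: saturated chains above its elements, cover relations away from `a` and maximal elements
are the same in both posets. The minimal elements of `P \ a` are those of `P` other than `a`
together with the `γ_j`, which cover only `a`. Hence `c(P) - c(P \ a) = ∑ uc(β_i)`,
`min(P) - min(P \ a) = 1 - t`, `edges(P) - edges(P \ a) = s + t`, `|P| - |P \ a| = 1`, and
`max` is unchanged.
-/

namespace UpChain

variable [PartialOrder α] {v w : α} {l : List α}

lemma head_unique (hv : UpChain v l) (hw : UpChain w l) : v = w :=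
  Option.some.inj (hv.2.1.symm.trans hw.2.1)

lemma pairwise_lt (h : UpChain v l) : l.Pairwise (· < ·) :=
  List.isChain_iff_pairwise.mp (h.1.imp fun _ _ hc => hc.lt)

lemma le_of_mem (h : UpChain v l) {x : α} (hx : x ∈ l) : v ≤ x := by
  have hlt := h.pairwise_lt
  obtain ⟨-, hhead, -⟩ := h
  rcases l with _ | ⟨y, t⟩
  · simp at hx
  · obtain rfl : v = y := (Option.some.inj hhead).symm
    rcases List.mem_cons.mp hx with rfl | hx
    · exact le_rfl
    · exact (List.rel_of_pairwise_cons hlt hx).le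

lemma cons (hvw : v ⋖ w) (h : UpChain w l) : UpChain v (v :: l) := by
  obtain ⟨hc, hhead, m, hlast, hm⟩ := h
  rcases l with _ | ⟨y, t⟩
  · simp at hhead
  · obtain rfl : w = y := (Option.some.inj hhead).symm
    exact ⟨List.isChain_cons_cons.mpr ⟨hvw, hc⟩, rfl, m, by rwa [List.getLast?_cons_cons], hm⟩

lemma exists_eq_cons (hv : ¬ IsMax v) (h : UpChain v l) :
    ∃ w t, l = v :: t ∧ v ⋖ w ∧ UpChain w t := by
  obtain ⟨hc, hhead, m, hlast, hm⟩ := h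
  rcases l with _ | ⟨y, _ | ⟨w, t⟩⟩
  · simp at hhead
  · obtain rfl : v = y := (Option.some.inj hhead).symm
    obtain rfl : v = m := Option.some.inj hlast
    exact absurd hm hv
  · obtain rfl : v = y := (Option.some.inj hhead).symm
    obtain ⟨hvw, hc⟩ := List.isChain_cons_cons.mp hc
    exact ⟨w, w :: t, rfl, hvw, hc, rfl, m, by rwa [List.getLast?_cons_cons] at hlast, hm⟩

end UpChain

lemma isMaxChainList_iff_exists_upChain [PartialOrder α] {l : List α} :
    IsMaxChainList l ↔ ∃ m, IsMin m ∧ UpChain m l :=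
  ⟨fun ⟨hc, ⟨m, hhead, hm⟩, hlast⟩ => ⟨m, hm, hc, hhead, hlast⟩,
    fun ⟨m, hm, hc, hhead, hlast⟩ => ⟨hc, ⟨m, hhead, hm⟩, hlast⟩⟩

section Counting

variable [Fintype α] [PartialOrder α]

instance (v : α) : Finite {l : List α // UpChain v l} := by
  refine Set.Finite.to_subtype ((List.finite_length_le α (Fintype.card α)).subset ?_)
  intro l hl
  exact List.Nodup.length_le_card ((UpChain.pairwise_lt (v := v) hl).imp ne_of_lt)

lemma card_sigma_upChain (p : α → Prop) :
    Nat.card (Σ v : {v // p v}, {l : List α // UpChain v.1 l}) =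
      ∑ v ∈ Finset.univ.filter p, uc v := by
  rw [Nat.card_sigma, Finset.sum_subtype (p := p) _ (by simp) uc]
  rfl

lemma uc_eq_sum_uc_covBy {v : α} (hv : ¬ IsMax v) :
    uc v = ∑ w ∈ Finset.univ.filter (v ⋖ ·), uc w := by
  rw [← card_sigma_upChain]
  refine (Nat.card_congr (Equiv.ofBijective
    (fun x : Σ w : {w // v ⋖ w}, {l // UpChain w.1 l} => ⟨v :: x.2.1, x.2.2.cons x.1.2⟩)
    ⟨?_, ?_⟩)).symm
  · rintro ⟨⟨w, _⟩, ⟨l, hl⟩⟩ ⟨⟨w', _⟩, ⟨l', hl'⟩⟩ h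
    obtain rfl : l = l' := (List.cons.inj (congrArg Subtype.val h)).2
    obtain rfl := hl.head_unique hl'
    rfl
  · rintro ⟨l, hl⟩
    obtain ⟨w, t, rfl, hvw, ht⟩ := hl.exists_eq_cons hv
    exact ⟨⟨⟨w, hvw⟩, ⟨t, ht⟩⟩, rfl⟩

lemma numMaxChains_eq_sum_uc :
    numMaxChains α = ∑ m ∈ Finset.univ.filter (IsMin : α → Prop), uc m := by
  rw [← card_sigma_upChain]
  refine (Nat.card_congr (Equiv.ofBijective
    (fun x : Σ m : {m : α // IsMin m}, {l // UpChain m.1 l} =>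
      ⟨x.2.1, isMaxChainList_iff_exists_upChain.mpr ⟨x.1.1, x.1.2, x.2.2⟩⟩) ⟨?_, ?_⟩)).symm
  · rintro ⟨⟨m, _⟩, ⟨l, hl⟩⟩ ⟨⟨m', _⟩, ⟨l', hl'⟩⟩ h
    obtain rfl : l = l' := congrArg Subtype.val h
    obtain rfl := hl.head_unique hl'
    rfl
  · rintro ⟨l, hl⟩
    obtain ⟨m, hm, hl⟩ := isMaxChainList_iff_exists_upChain.mp hl
    exact ⟨⟨⟨m, hm⟩, ⟨l, hl⟩⟩, rfl⟩

end Counting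

namespace IsUpperSet

variable [PartialOrder α] {p : α → Prop}

lemma val_covBy_val_iff (hp : IsUpperSet {x | p x}) {x y : {x // p x}} : x.1 ⋖ y.1 ↔ x ⋖ y :=
  Set.OrdConnected.apply_covBy_apply_iff (OrderEmbedding.subtype p)
    (by simpa using hp.ordConnected)

lemma isMax_val_iff (hp : IsUpperSet {x | p x}) {x : {x // p x}} : IsMax x.1 ↔ IsMax x :=
  ⟨fun h _ hy => h hy, fun h y hy => h (b := ⟨y, hp hy x.2⟩) hy⟩

lemma upChain_map_val_iff (hp : IsUpperSet {x | p x}) {x : {x // p x}} {l : List {x // p x}} :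
    UpChain x.1 (l.map Subtype.val) ↔ UpChain x l := by
  simp only [UpChain, List.Chain', List.isChain_map, hp.val_covBy_val_iff, List.head?_map,
    List.getLast?_map, Option.map_eq_some_iff, Subtype.val_injective.eq_iff, exists_eq_right,
    exists_exists_and_eq_and, hp.isMax_val_iff]

lemma uc_val (hp : IsUpperSet {x | p x}) (x : {x // p x}) : uc x.1 = uc x := by
  refine (Nat.card_congr (Equiv.ofBijective
    (fun l : {l // UpChain x l} => ⟨l.1.map Subtype.val, hp.upChain_map_val_iff.mpr l.2⟩)
    ⟨?_, ?_⟩)).symm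
  · exact fun l l' h => Subtype.ext (List.map_injective_iff.mpr Subtype.val_injective
      (congrArg Subtype.val h))
  · rintro ⟨l, hl⟩
    lift l to List {x // p x} using fun y hy => hp (hl.le_of_mem hy) x.2
    exact ⟨⟨l, hp.upChain_map_val_iff.mp hl⟩, rfl⟩

lemma numMax_subtype (hp : IsUpperSet {x | p x}) (hmax : ∀ m, IsMax m → p m) :
    numMax {x // p x} = numMax α :=
  Nat.card_congr ((Equiv.subtypeEquivRight fun _ => hp.isMax_val_iff.symm).trans
    (Equiv.subtypeSubtypeEquivSubtype (hmax _)))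

lemma numEdges_subtype (hp : IsUpperSet {x | p x}) :
    numEdges {x // p x} = Nat.card {e : α × α // e.1 ⋖ e.2 ∧ p e.1} :=
  Nat.card_congr
    { toFun e := ⟨(e.1.1, e.1.2), hp.val_covBy_val_iff.mpr e.2, e.1.1.2⟩
      invFun e := ⟨(⟨e.1.1, e.2.2⟩, ⟨e.1.2, hp e.2.1.le e.2.2⟩), hp.val_covBy_val_iff.mp e.2.1⟩
      left_inv _ := rfl
      right_inv _ := rfl }

end IsUpperSet

lemma Nat.card_subtype_eq_card_and_add_card_and_not {β : Type*} [Finite β] (p q : β → Prop) :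
    Nat.card {x // p x} = Nat.card {x // p x ∧ q x} + Nat.card {x // p x ∧ ¬ q x} := by
  rw [Nat.card_congr (Equiv.sumCompl fun x : {x // p x} => q x.1).symm, Nat.card_sum,
    Nat.card_congr (Equiv.subtypeSubtypeEquivSubtypeInter p q),
    Nat.card_congr (Equiv.subtypeSubtypeEquivSubtypeInter p (¬ q ·))]

lemma Nat.card_eq_card_subtype_ne_add_one [Fintype α] (a : α) :
    Nat.card α = Nat.card {x // x ≠ a} + 1 := by
  have : 0 < Fintype.card α := Fintype.card_pos_iff.mpr ⟨a⟩
  simp only [Nat.card_eq_fintype_card, Fintype.card_subtype_compl, Fintype.card_unique]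
  omega

lemma numMin_eq_card_filter [Fintype α] [PartialOrder α] :
    numMin α = (Finset.univ.filter (IsMin : α → Prop)).card := by
  rw [numMin, Nat.card_eq_fintype_card, Fintype.card_subtype]

section DeleteMin

variable [PartialOrder α] {a : α}

lemma IsMin.isUpperSet_ne (ha : IsMin a) : IsUpperSet {x | x ≠ a} :=
  fun _ _ hxy hx hy => hx (ha.eq_of_le (hy ▸ hxy))

lemma isMin_subtype_ne_iff_forall_lt {x : {x // x ≠ a}} : IsMin x ↔ ∀ y < x.1, y = a :=
  ⟨fun h y hy => by_contra fun hya => not_lt_of_ge (h (b := ⟨y, hya⟩) hy.le) hy,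
    fun h y hy => (hy.lt_or_eq.resolve_left fun hlt => y.2 (h y.1 hlt)).ge⟩

lemma isMin_subtype_ne_iff [Finite α] (ha : IsMin a) {x : {x // x ≠ a}} :
    IsMin x ↔ IsMin x.1 ∨ (a ⋖ x.1 ∧ ¬ ∃ c, c ≠ a ∧ c ⋖ x.1) := by
  rw [isMin_subtype_ne_iff_forall_lt]
  constructor
  · intro h
    refine or_iff_not_imp_left.mpr fun hx => ?_
    obtain ⟨y, hy⟩ := not_isMin_iff.mp hx
    obtain rfl := h y hy
    exact ⟨⟨hy, fun c hac hcx => hac.ne' (h c hcx)⟩, fun ⟨c, hca, hcx⟩ => hca (h c hcx.lt)⟩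
  · rintro (hx | ⟨-, hx⟩) y hy
    · exact absurd hy hx.not_lt
    · obtain ⟨c, hyc, hcx⟩ := exists_le_covBy_of_lt hy
      obtain rfl : c = a := not_not.mp fun hca => hx ⟨c, hca, hcx⟩
      exact ha.eq_of_le hyc

variable [Fintype α]

lemma sum_filter_covBy_eq_add {M : Type*} [AddCommMonoid M] (a : α) (f : α → M) :
    ∑ b ∈ Finset.univ.filter (a ⋖ ·), f b =
      ∑ b ∈ Finset.univ.filter (fun b => a ⋖ b ∧ ∃ c, c ≠ a ∧ c ⋖ b), f b +
        ∑ b ∈ Finset.univ.filter (fun b => a ⋖ b ∧ ¬ ∃ c, c ≠ a ∧ c ⋖ b), f b := by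
  rw [← Finset.sum_filter_add_sum_filter_not _ (fun b => ∃ c, c ≠ a ∧ c ⋖ b),
    Finset.filter_filter, Finset.filter_filter]

lemma map_filter_isMin_subtype_ne (ha : IsMin a) :
    (Finset.univ.filter (IsMin : {x // x ≠ a} → Prop)).map (Function.Embedding.subtype _) =
      (Finset.univ.filter IsMin).erase a ∪
        Finset.univ.filter (fun b => a ⋖ b ∧ ¬ ∃ c, c ≠ a ∧ c ⋖ b) := by
  ext x
  simp only [Finset.mem_map, Finset.mem_filter, Finset.mem_univ, true_and,
    Function.Embedding.coe_subtype, Finset.mem_union, Finset.mem_erase, Subtype.exists,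
    exists_and_right, exists_eq_right, isMin_subtype_ne_iff ha]
  constructor
  · rintro ⟨hxa, hx | hx⟩
    exacts [Or.inl ⟨hxa, hx⟩, Or.inr hx]
  · rintro (⟨hxa, hx⟩ | hx)
    exacts [⟨hxa, Or.inl hx⟩, ⟨hx.1.ne', Or.inr hx⟩]

lemma disjoint_erase_filter_isMin_filter_covBy (a : α) :
    Disjoint ((Finset.univ.filter IsMin).erase a)
      (Finset.univ.filter (fun b => a ⋖ b ∧ ¬ ∃ c, c ≠ a ∧ c ⋖ b)) := by
  refine Finset.disjoint_left.mpr fun b hb hb' => ?_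
  exact (Finset.mem_filter.mp (Finset.mem_of_mem_erase hb)).2.not_lt
    (Finset.mem_filter.mp hb').2.1.lt

lemma numMin_subtype_ne_add_one (ha : IsMin a) :
    numMin {x // x ≠ a} + 1 =
      numMin α + (Finset.univ.filter (fun b => a ⋖ b ∧ ¬ ∃ c, c ≠ a ∧ c ⋖ b)).card := by
  rw [numMin_eq_card_filter, ← Finset.card_map (Function.Embedding.subtype _),
    map_filter_isMin_subtype_ne ha,
    Finset.card_union_of_disjoint (disjoint_erase_filter_isMin_filter_covBy a),
    numMin_eq_card_filter, ← Finset.card_erase_add_one ((Finset.mem_filter_univ a).mpr ha)]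
  omega

lemma numMaxChains_subtype_ne_add (ha : IsMin a) (hna : ¬ IsMax a) :
    numMaxChains {x // x ≠ a} + ∑ b ∈ Finset.univ.filter (a ⋖ ·), uc b =
      numMaxChains α +
        ∑ b ∈ Finset.univ.filter (fun b => a ⋖ b ∧ ¬ ∃ c, c ≠ a ∧ c ⋖ b), uc b := by
  have hsub : numMaxChains {x // x ≠ a} =
      ∑ m ∈ (Finset.univ.filter IsMin).erase a, uc m +
        ∑ b ∈ Finset.univ.filter (fun b => a ⋖ b ∧ ¬ ∃ c, c ≠ a ∧ c ⋖ b), uc b := by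
    rw [numMaxChains_eq_sum_uc,
      Finset.sum_congr rfl fun m _ => (ha.isUpperSet_ne.uc_val m).symm,
      ← Finset.sum_union (disjoint_erase_filter_isMin_filter_covBy a),
      ← map_filter_isMin_subtype_ne ha, Finset.sum_map]
    rfl
  have hall : numMaxChains α =
      ∑ b ∈ Finset.univ.filter (a ⋖ ·), uc b + ∑ m ∈ (Finset.univ.filter IsMin).erase a, uc m := by
    rw [numMaxChains_eq_sum_uc, ← Finset.add_sum_erase _ _ ((Finset.mem_filter_univ a).mpr ha),
      uc_eq_sum_uc_covBy hna]
  omega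

lemma numEdges_eq_numEdges_subtype_ne_add (ha : IsMin a) :
    numEdges α = numEdges {x // x ≠ a} + (Finset.univ.filter (a ⋖ ·)).card := by
  have hfrom :
      Nat.card {e : α × α // e.1 ⋖ e.2 ∧ e.1 = a} = (Finset.univ.filter (a ⋖ ·)).card := by
    rw [← Fintype.card_subtype, ← Nat.card_eq_fintype_card]
    exact Nat.card_congr
      { toFun e := ⟨e.1.2, by obtain ⟨⟨_, _⟩, h, rfl⟩ := e; exact h⟩
        invFun b := ⟨(a, b.1), b.2, rfl⟩
        left_inv := by rintro ⟨⟨_, _⟩, _, rfl⟩; rfl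
        right_inv _ := rfl }
  rw [ha.isUpperSet_ne.numEdges_subtype, numEdges,
    Nat.card_subtype_eq_card_and_add_card_and_not _ (fun e : α × α => e.1 = a), hfrom]
  exact Nat.add_comm _ _

end DeleteMin

theorem gap_deletion (α : Type*) [Fintype α] [PartialOrder α] (a : α)
    (hmin : IsMin a) (hmax : ¬ IsMax a) :
    gap α - gap {x : α // x ≠ a} =
      ∑ b ∈ Finset.univ.filter (fun b : α => a ⋖ b ∧ ∃ c, c ≠ a ∧ c ⋖ b),
        ((uc b : ℤ) - 1) := by
  have hchains := numMaxChains_subtype_ne_add hmin hmax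
  have hmins := numMin_subtype_ne_add_one hmin
  have hmaxs := hmin.isUpperSet_ne.numMax_subtype fun m hm hma => hmax (hma ▸ hm)
  have hedges := numEdges_eq_numEdges_subtype_ne_add hmin
  have hcard := Nat.card_eq_card_subtype_ne_add_one a
  have hsum := sum_filter_covBy_eq_add a uc
  have hnum := sum_filter_covBy_eq_add a fun _ => 1
  simp only [← Finset.card_eq_sum_ones] at hnum
  rw [Finset.sum_sub_distrib, ← Finset.cast_card, ← Nat.cast_sum]
  simp only [gap]
  omega
end

section
/- Let P be a finite poset with gap(P) = c(P) + |P| - (max(P) + min(P) + edges(P)). For any maximal antichain A of P, gap(P) ≥ Σ_{v ∈ A} (uc(v) - 1)(dc(v) - 1), where uc(v) and dc(v) are the numbers of saturated chains from v up to a maximal element and down to a minimal element of P respectively. -/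
open Classical

variable {α : Type*}

/-!
Let `S` and `T` be the up- and down-closures of the maximal antichain `A`, so that `S ∪ T = P`
and `S ∩ T = A`. Unwinding the recursion `uc v = ∑_{v ⋖ w} uc w` gives
`uc v ≥ 1 + ∑_{z ≥ v} (#(upper covers of z) - 1)`, hence
`∑_{a ∈ A} uc a ≥ #A + ∑_{z ∈ S} (#(upper covers of z) - 1)`, and dually for `dc` and `T`.
Gluing a down-chain and an up-chain at `a ∈ A` gives `dc a * uc a` maximal chains through `a`,
and since a chain meets `A` at most once these are distinct for distinct `a`; every cover
`x ⋖ y` with `x ∉ S` and `y ∉ T` yields at least one more maximal chain, which avoids `A`.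
A cover never leads from `S` into `T`, so the covers split into those starting in `S`, those
ending in `T`, and those of the last kind. Adding up these counts gives the bound.
-/

open Finset OrderDual

namespace List

lemma append_inj_of_forall_mem {p : α → Prop} {l₁ l₂ l₁' l₂' : List α}
    (h : l₁ ++ l₂ = l₁' ++ l₂') (h₁ : ∀ x ∈ l₁, p x) (h₁' : ∀ x ∈ l₁', p x)
    (h₂ : ∀ x ∈ l₂, ¬ p x) (h₂' : ∀ x ∈ l₂', ¬ p x) : l₁ = l₁' ∧ l₂ = l₂' := by
  have filter_eq {l r : List α} (hl : ∀ x ∈ l, p x) (hr : ∀ x ∈ r, ¬ p x) :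
      (l ++ r).filter (fun x => decide (p x)) = l := by
    rw [filter_append, filter_eq_self.mpr (by simpa using hl),
      filter_eq_nil_iff.mpr (by simpa using hr), append_nil]
  have h₁₁' : l₁ = l₁' := by rw [← filter_eq h₁ h₂, h, filter_eq h₁' h₂']
  exact ⟨h₁₁', append_cancel_left (h₁₁' ▸ h)⟩

lemma IsChain.nodup_of_covBy [PartialOrder α] {l : List α} (h : l.IsChain (· ⋖ ·)) : l.Nodup :=
  (isChain_iff_pairwise.mp (h.imp fun _ _ => CovBy.lt)).imp ne_of_lt

end List

lemma Finset.sum_le_sum_sum_of_forall_exists {ι κ M : Type*} [AddCommMonoid M] [PartialOrder M]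
    [CanonicallyOrderedAdd M] {s : Finset ι} {t : Finset κ} {u : κ → Finset ι} (f : ι → M)
    (h : ∀ i ∈ s, ∃ k ∈ t, i ∈ u k) : ∑ i ∈ s, f i ≤ ∑ k ∈ t, ∑ i ∈ u k, f i :=
  calc ∑ i ∈ s, f i ≤ ∑ i ∈ s, ∑ k ∈ t with i ∈ u k, f i := sum_le_sum fun i hi => by
        obtain ⟨k, hk, hik⟩ := h i hi
        exact single_le_sum (f := fun _ => f i) (fun _ _ => zero_le) (mem_filter.mpr ⟨hk, hik⟩)
    _ = ∑ k ∈ t, ∑ i ∈ s with i ∈ u k, f i := sum_comm' fun _ _ => by simp; tauto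
    _ ≤ ∑ k ∈ t, ∑ i ∈ u k, f i := by
        gcongr with k
        exact fun i hi => (mem_filter.mp hi).2

section Chains

variable [PartialOrder α]

instance [Fintype α] (v : α) : Finite {l : List α // UpChain v l} :=
  .of_injective (Subtype.impEmbedding _ (·.Nodup) fun _ h => List.IsChain.nodup_of_covBy h.1)
    (Function.Embedding.injective _)

instance [Fintype α] (v : α) : Finite {l : List α // DownChain v l} :=
  .of_injective (Subtype.impEmbedding _ (·.Nodup) fun _ h => List.IsChain.nodup_of_covBy h.1)
    (Function.Embedding.injective _)

instance [Fintype α] : Finite {l : List α // IsMaxChainList l} :=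
  .of_injective (Subtype.impEmbedding _ (·.Nodup) fun _ h => List.IsChain.nodup_of_covBy h.1)
    (Function.Embedding.injective _)

lemma upChain_iff {v : α} {l : List α} :
    UpChain v l ↔ (l = [v] ∧ IsMax v) ∨ ∃ w l', l = v :: l' ∧ v ⋖ w ∧ UpChain w l' := by
  constructor
  · rintro ⟨hc, hh, m, hm, hmax⟩
    obtain _ | ⟨a, _ | ⟨b, t⟩⟩ := l
    · simp at hh
    · obtain rfl : a = v := by simpa using hh
      obtain rfl : a = m := by simpa using hm
      exact .inl ⟨rfl, hmax⟩
    · obtain rfl : a = v := by simpa using hh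
      obtain ⟨hab, hc⟩ := List.isChain_cons_cons.mp hc
      exact .inr ⟨b, b :: t, rfl, hab, hc, rfl, m, by simpa using hm, hmax⟩
  · rintro (⟨rfl, hv⟩ | ⟨w, l', rfl, hvw, hc, hh, m, hm, hmax⟩)
    · exact ⟨List.isChain_singleton v, rfl, v, rfl, hv⟩
    · obtain ⟨t, rfl⟩ : ∃ t, l' = w :: t := by
        cases l' <;> simp_all
      exact ⟨List.isChain_cons_cons.mpr ⟨hvw, hc⟩, rfl, m, by simpa using hm, hmax⟩

lemma UpChain.eq_cons {v : α} {l : List α} (h : UpChain v l) : l = v :: l.tail := by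
  obtain _ | ⟨a, t⟩ := l
  · simp [UpChain] at h
  · obtain rfl : a = v := by simpa using h.2.1
    rfl

lemma UpChain.lt_of_mem_tail {v x : α} {l : List α} (h : UpChain v l) (hx : x ∈ l.tail) :
    v < x := by
  have hlt := List.isChain_iff_pairwise.mp (List.IsChain.imp (fun _ _ => CovBy.lt) h.1)
  rw [h.eq_cons] at hlt
  exact List.rel_of_pairwise_cons hlt hx

lemma UpChain.le_of_mem_s5 {v x : α} {l : List α} (h : UpChain v l) (hx : x ∈ l) : v ≤ x := by
  rw [h.eq_cons, List.mem_cons] at hx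
  exact hx.elim ge_of_eq fun hx => (h.lt_of_mem_tail hx).le

lemma uc_of_isMax {v : α} (hv : IsMax v) : uc v = 1 := by
  rw [uc, Nat.card_eq_one_iff_exists]
  refine ⟨⟨[v], upChain_iff.mpr (.inl ⟨rfl, hv⟩)⟩, fun ⟨l, hl⟩ => Subtype.ext ?_⟩
  obtain ⟨rfl, -⟩ | ⟨w, l', -, hvw, -⟩ := upChain_iff.mp hl
  · rfl
  · exact absurd hvw.lt hv.not_lt

lemma downChain_iff_upChain_reverse {v : α} {l : List α} :
    DownChain v l ↔ UpChain (toDual v) (l.map toDual).reverse := by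
  show l.IsChain (· ⋖ ·) ∧ _ ↔ List.IsChain (· ⋖ ·) _ ∧ _
  simp only [List.isChain_map, List.isChain_reverse, List.head?_map, List.getLast?_map,
    List.head?_reverse, List.getLast?_reverse, toDual_covBy_toDual_iff, Option.map_eq_some_iff,
    toDual_inj, exists_eq_right, OrderDual.exists, isMax_toDual_iff]
  tauto

lemma DownChain.le_of_mem_s5 {v x : α} {l : List α} (h : DownChain v l) (hx : x ∈ l) : x ≤ v :=
  (downChain_iff_upChain_reverse.mp h).le_of_mem_s5 (x := toDual x) (by simpa using hx)

lemma dc_eq_uc_toDual (v : α) : dc v = uc (toDual v) :=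
  Nat.card_congr <| Equiv.subtypeEquiv
    ((Equiv.listEquivOfEquiv toDual).trans List.reverse_involutive.toPerm)
    fun _ => downChain_iff_upChain_reverse

lemma numMax_orderDual : numMax αᵒᵈ = numMin α := rfl

lemma DownChain.append_upChain {x y : α} {l₁ l₂ : List α} (h₁ : DownChain x l₁)
    (h₂ : UpChain y l₂) (hxy : x ⋖ y) : IsMaxChainList (l₁ ++ l₂) := by
  obtain ⟨hc₁, ⟨m₁, hm₁, hmin⟩, hx⟩ := h₁
  obtain ⟨hc₂, hy, m₂, hm₂, hmax⟩ := h₂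
  refine ⟨List.isChain_append.mpr ⟨hc₁, hc₂, ?_⟩, ⟨m₁, ?_, hmin⟩, m₂, ?_, hmax⟩
  · simp_all
  · simp [List.head?_append, hm₁]
  · simp [List.getLast?_append, hm₂]

lemma DownChain.append_tail {a : α} {l₁ l₂ : List α} (h₁ : DownChain a l₁)
    (h₂ : UpChain a l₂) : IsMaxChainList (l₁ ++ l₂.tail) := by
  obtain ⟨rfl, hmax⟩ | ⟨w, l', rfl, haw, hl'⟩ := upChain_iff.mp h₂
  · rw [List.tail_cons, List.append_nil]
    exact ⟨h₁.1, h₁.2.1, a, h₁.2.2, hmax⟩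
  · exact h₁.append_upChain hl' haw

end Chains

section Covers

variable [Fintype α] [PartialOrder α]

noncomputable def upperCovers (v : α) : Finset α := {w | v ⋖ w}

noncomputable def lowerCovers (v : α) : Finset α := {w | w ⋖ v}

@[simp] lemma mem_upperCovers {v w : α} : w ∈ upperCovers v ↔ v ⋖ w := by simp [upperCovers]

lemma card_upperCovers_eq_zero_iff {v : α} : #(upperCovers v) = 0 ↔ IsMax v := by
  refine ⟨fun h => ?_, fun hv => ?_⟩
  · by_contra hv
    obtain ⟨w, hw⟩ := exists_covBy_of_wellFoundedLT hv
    exact notMem_empty w (card_eq_zero.mp h ▸ mem_upperCovers.mpr hw)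
  · exact card_eq_zero.mpr (eq_empty_of_forall_notMem fun w hw =>
      hv.not_lt (mem_upperCovers.mp hw).lt)

lemma card_upperCovers_toDual (v : α) : #(upperCovers (toDual v)) = #(lowerCovers v) := by
  rw [← card_map ofDual.toEmbedding]
  congr 1
  ext w
  simp [lowerCovers]

lemma exists_upChain (v : α) : ∃ l, UpChain v l := by
  induction v using WellFoundedGT.induction with
  | _ v ih =>
  by_cases hv : IsMax v
  · exact ⟨[v], upChain_iff.mpr (.inl ⟨rfl, hv⟩)⟩
  · obtain ⟨w, hvw⟩ := exists_covBy_of_wellFoundedLT hv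
    obtain ⟨l, hl⟩ := ih w hvw.lt
    exact ⟨v :: l, upChain_iff.mpr (.inr ⟨w, l, rfl, hvw, hl⟩)⟩

lemma uc_pos (v : α) : 0 < uc v :=
  have ⟨l, hl⟩ := exists_upChain v
  have : Nonempty {l // UpChain v l} := ⟨⟨l, hl⟩⟩
  Nat.card_pos

lemma dc_pos (v : α) : 0 < dc v :=
  dc_eq_uc_toDual v ▸ uc_pos _

lemma uc_eq_sum_upperCovers {v : α} (hv : ¬ IsMax v) : uc v = ∑ w ∈ upperCovers v, uc w := by
  have hcons : Function.Bijective fun q : Σ w : {w // v ⋖ w}, {l // UpChain w.1 l} =>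
      (⟨v :: q.2.1, upChain_iff.mpr (.inr ⟨_, _, rfl, q.1.2, q.2.2⟩)⟩ : {l // UpChain v l}) := by
    refine ⟨fun ⟨⟨w, _⟩, ⟨l, hl⟩⟩ ⟨⟨w', _⟩, ⟨l', hl'⟩⟩ h => ?_, fun ⟨l, hl⟩ => ?_⟩
    · obtain rfl : l = l' := by simpa using h
      obtain rfl : w = w' := by simpa [hl.2.1] using hl'.2.1
      rfl
    · obtain ⟨rfl, hmax⟩ | ⟨w, l', rfl, hvw, hl'⟩ := upChain_iff.mp hl
      · exact absurd hmax hv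
      · exact ⟨⟨⟨w, hvw⟩, ⟨l', hl'⟩⟩, rfl⟩
  rw [uc, ← Nat.card_eq_of_bijective _ hcons, Nat.card_sigma,
    sum_subtype _ fun _ => mem_upperCovers]
  rfl

lemma one_add_sum_le_uc (v : α) : 1 + ∑ z ∈ {z | v ≤ z}, (#(upperCovers z) - 1) ≤ uc v := by
  induction v using WellFoundedGT.induction with
  | _ v ih =>
  by_cases hv : IsMax v
  · have hz : univ.filter (v ≤ ·) = {v} := by
      ext z
      simpa [eq_comm] using ⟨fun h => le_antisymm h (hv h), fun h => h.le⟩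
    simp [hz, uc_of_isMax hv, card_upperCovers_eq_zero_iff.mpr hv]
  · have hsplit : univ.filter (v ≤ ·) = insert v (univ.filter (v < ·)) := by
      ext z
      simp [le_iff_eq_or_lt, eq_comm]
    have hpos : #(upperCovers v) ≠ 0 := mt card_upperCovers_eq_zero_iff.mp hv
    calc 1 + ∑ z ∈ {z | v ≤ z}, (#(upperCovers z) - 1)
        = #(upperCovers v) + ∑ z ∈ {z | v < z}, (#(upperCovers z) - 1) := by
          rw [hsplit, sum_insert (by simp)]
          omega
      _ ≤ #(upperCovers v) + ∑ w ∈ upperCovers v, ∑ z ∈ {z | w ≤ z}, (#(upperCovers z) - 1) := by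
          gcongr
          refine sum_le_sum_sum_of_forall_exists _ fun z hz => ?_
          obtain ⟨w, hvw, hwz⟩ := (mem_filter.mp hz).2.exists_covby_le
          exact ⟨w, mem_upperCovers.mpr hvw, by simpa using hwz⟩
      _ = ∑ w ∈ upperCovers v, (1 + ∑ z ∈ {z | w ≤ z}, (#(upperCovers z) - 1)) := by
          rw [sum_add_distrib, card_eq_sum_ones]
      _ ≤ ∑ w ∈ upperCovers v, uc w := sum_le_sum fun w hw => ih w (mem_upperCovers.mp hw).lt
      _ = uc v := (uc_eq_sum_upperCovers hv).symm

lemma card_add_sum_le_sum_uc {A U : Finset α} (hU : ∀ z ∈ U, ∃ a ∈ A, a ≤ z) :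
    #A + ∑ z ∈ U, (#(upperCovers z) - 1) ≤ ∑ a ∈ A, uc a :=
  calc #A + ∑ z ∈ U, (#(upperCovers z) - 1)
      ≤ #A + ∑ a ∈ A, ∑ z ∈ {z | a ≤ z}, (#(upperCovers z) - 1) := by
        gcongr
        exact sum_le_sum_sum_of_forall_exists _ fun z hz => by simpa using hU z hz
    _ = ∑ a ∈ A, (1 + ∑ z ∈ {z | a ≤ z}, (#(upperCovers z) - 1)) := by
        rw [sum_add_distrib, card_eq_sum_ones]
    _ ≤ ∑ a ∈ A, uc a := sum_le_sum fun a _ => one_add_sum_le_uc a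

lemma card_add_sum_le_sum_dc {A U : Finset α} (hU : ∀ z ∈ U, ∃ a ∈ A, z ≤ a) :
    #A + ∑ z ∈ U, (#(lowerCovers z) - 1) ≤ ∑ a ∈ A, dc a := by
  simpa [sum_map, card_upperCovers_toDual, ← dc_eq_uc_toDual] using
    card_add_sum_le_sum_uc (A := A.map toDual.toEmbedding) (U := U.map toDual.toEmbedding)
      (by simpa using hU)

end Covers

section MaxChainCount

variable [PartialOrder α]

def chainThrough (a : α) (c : {l : List α // DownChain a l} × {l : List α // UpChain a l}) :
    {l : List α // IsMaxChainList l} :=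
  ⟨c.1.1 ++ c.2.1.tail, c.1.2.append_tail c.2.2⟩

def chainAcross {x y : α} (hxy : x ⋖ y)
    (c : {l : List α // DownChain x l} × {l : List α // UpChain y l}) :
    {l : List α // IsMaxChainList l} :=
  ⟨c.1.1 ++ c.2.1, c.1.2.append_upChain c.2.2 hxy⟩

lemma chainThrough_injective {A : Set α} (hA : IsAntichain (· ≤ ·) A) :
    Function.Injective fun q : Σ a : A, {l : List α // DownChain a.1 l} ×
      {l : List α // UpChain a.1 l} => chainThrough q.1.1 q.2 := by
  rintro ⟨⟨a, ha⟩, ⟨d, hd⟩, ⟨u, hu⟩⟩ ⟨⟨b, hb⟩, ⟨d', hd'⟩, ⟨u', hu'⟩⟩ h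
  replace h : d ++ u.tail = d' ++ u'.tail := congrArg Subtype.val h
  -- every element of the glued chain is comparable with `a`, so `a` is its only element of `A`
  have hb_mem : b ∈ d ++ u.tail := h ▸ List.mem_append_left _ (List.mem_of_getLast? hd'.2.2)
  obtain rfl : a = b := by
    rcases List.mem_append.mp hb_mem with hbd | hbu
    · exact (hA.eq hb ha (hd.le_of_mem_s5 hbd)).symm
    · exact hA.eq ha hb (hu.lt_of_mem_tail hbu).le
  obtain ⟨rfl, htail⟩ := List.append_inj_of_forall_mem (p := (· ≤ a)) h
    (fun _ => hd.le_of_mem_s5) (fun _ => hd'.le_of_mem_s5)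
    (fun _ hx => (hu.lt_of_mem_tail hx).not_ge) (fun _ hx => (hu'.lt_of_mem_tail hx).not_ge)
  obtain rfl : u = u' := by rw [hu.eq_cons, hu'.eq_cons, htail]
  rfl

lemma chainAcross_injective {S : Set α} (hS : IsUpperSet S) {E : Set (α × α)}
    (hE : ∀ e ∈ E, e.1 ⋖ e.2 ∧ e.1 ∉ S ∧ e.2 ∈ S) :
    Function.Injective fun q : Σ e : E, {l : List α // DownChain e.1.1 l} ×
      {l : List α // UpChain e.1.2 l} => chainAcross (hE _ q.1.2).1 q.2 := by
  rintro ⟨⟨⟨x, y⟩, he⟩, ⟨d, hd⟩, ⟨u, hu⟩⟩ ⟨⟨⟨x', y'⟩, he'⟩, ⟨d', hd'⟩, ⟨u', hu'⟩⟩ h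
  replace h : d ++ u = d' ++ u' := congrArg Subtype.val h
  obtain ⟨-, hx, hy⟩ := hE _ he
  obtain ⟨-, hx', hy'⟩ := hE _ he'
  -- the glued chain is split where it enters the upper set `S`
  obtain ⟨rfl, rfl⟩ := List.append_inj_of_forall_mem (p := (· ∉ S)) h
    (fun _ hz hzS => hx (hS (hd.le_of_mem_s5 hz) hzS))
    (fun _ hz hzS => hx' (hS (hd'.le_of_mem_s5 hz) hzS))
    (fun _ hz => not_not.mpr (hS (hu.le_of_mem_s5 hz) hy))
    (fun _ hz => not_not.mpr (hS (hu'.le_of_mem_s5 hz) hy'))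
  obtain rfl : x = x' := Option.some_injective _ (hd.2.2.symm.trans hd'.2.2)
  obtain rfl : y = y' := Option.some_injective _ (hu.2.1.symm.trans hu'.2.1)
  rfl

lemma chainThrough_ne_chainAcross {A : Set α} {a x y : α} (ha : a ∈ A) (hxy : x ⋖ y)
    (hx : x ∉ upperClosure A) (hy : y ∉ lowerClosure A) (c c') :
    chainThrough a c ≠ chainAcross hxy c' := by
  intro h
  replace h : c.1.1 ++ c.2.1.tail = c'.1.1 ++ c'.2.1 := congrArg Subtype.val h
  have ha_mem : a ∈ c'.1.1 ++ c'.2.1 := h ▸ List.mem_append_left _ (List.mem_of_getLast? c.1.2.2.2)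
  rcases List.mem_append.mp ha_mem with had | hau
  · exact hx (mem_upperClosure.mpr ⟨a, ha, c'.1.2.le_of_mem_s5 had⟩)
  · exact hy (mem_lowerClosure.mpr ⟨a, ha, c'.2.2.le_of_mem_s5 hau⟩)

lemma sum_dc_mul_uc_add_card_le_numMaxChains [Fintype α] {A : Finset α}
    (hA : IsAntichain (· ≤ ·) (A : Set α)) (hmax : ∀ x, ∃ a ∈ A, x ≤ a ∨ a ≤ x) :
    ∑ a ∈ A, dc a * uc a + #{e : α × α | e.1 ⋖ e.2 ∧ e.1 ∉ (upperClosure (A : Set α) : Set α) ∧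
      e.2 ∉ (lowerClosure (A : Set α) : Set α)} ≤ numMaxChains α := by
  set E : Set (α × α) := {e | e.1 ⋖ e.2 ∧ e.1 ∉ (upperClosure (A : Set α) : Set α) ∧
    e.2 ∉ (lowerClosure (A : Set α) : Set α)}
  have hE : ∀ e ∈ E, e.1 ⋖ e.2 ∧ e.1 ∉ upperClosure (A : Set α) ∧
      e.2 ∈ upperClosure (A : Set α) := fun e ⟨hc, hx, hy⟩ => by
    refine ⟨hc, hx, ?_⟩
    obtain ⟨a, ha, hya | hay⟩ := hmax e.2
    · exact absurd (mem_lowerClosure.mpr ⟨a, ha, hya⟩) hy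
    · exact mem_upperClosure.mpr ⟨a, ha, hay⟩
  have hinj := (chainThrough_injective hA).sumElim
    (chainAcross_injective (upperClosure _).upper hE)
    fun q q' => chainThrough_ne_chainAcross q.1.2 _ q'.1.2.2.1 q'.1.2.2.2 _ _
  have hcard := Nat.card_le_card_of_injective _ hinj
  rw [Nat.card_sum, Nat.card_sigma, Nat.card_sigma] at hcard
  refine le_trans ?_ hcard
  gcongr
  · rw [sum_subtype A (p := (· ∈ (A : Set α))) fun _ => Iff.rfl]
    exact (sum_congr rfl fun a _ => by rw [Nat.card_prod]; rfl).le
  · rw [← Fintype.card_subtype, Fintype.card_eq_sum_ones]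
    exact sum_le_sum fun e _ => by
      rw [Nat.card_prod]
      exact Nat.mul_pos (dc_pos _) (uc_pos _)

end MaxChainCount

section Counting

variable [Fintype α] [PartialOrder α]

lemma card_covBy_fst_mem (s : Finset α) :
    #{e : α × α | e.1 ⋖ e.2 ∧ e.1 ∈ s} = ∑ z ∈ s, #(upperCovers z) :=
  calc #{e : α × α | e.1 ⋖ e.2 ∧ e.1 ∈ s}
      = ∑ x, if x ∈ s then #(upperCovers x) else 0 := by
        simp only [card_filter, Fintype.sum_prod_type, upperCovers]
        exact sum_congr rfl fun x _ => by split_ifs <;> simp [*]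
    _ = ∑ z ∈ s, #(upperCovers z) := by rw [sum_ite_mem, univ_inter]

lemma card_covBy_snd_mem (s : Finset α) :
    #{e : α × α | e.1 ⋖ e.2 ∧ e.2 ∈ s} = ∑ z ∈ s, #(lowerCovers z) :=
  calc #{e : α × α | e.1 ⋖ e.2 ∧ e.2 ∈ s}
      = ∑ y, if y ∈ s then #(lowerCovers y) else 0 := by
        simp only [card_filter, Fintype.sum_prod_type_right, lowerCovers]
        exact sum_congr rfl fun y _ => by split_ifs <;> simp [*]
    _ = ∑ z ∈ s, #(lowerCovers z) := by rw [sum_ite_mem, univ_inter]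

lemma numEdges_eq {S T : Set α} (hST : ∀ x y, x ⋖ y → x ∈ S → y ∉ T) :
    numEdges α = ∑ z ∈ S.toFinset, #(upperCovers z) + ∑ z ∈ T.toFinset, #(lowerCovers z) +
      #{e : α × α | e.1 ⋖ e.2 ∧ e.1 ∉ S ∧ e.2 ∉ T} := by
  rw [numEdges, Nat.card_eq_fintype_card, Fintype.card_subtype, ← card_covBy_fst_mem,
    ← card_covBy_snd_mem]
  simp only [card_filter, ← sum_add_distrib]
  refine sum_congr rfl fun e _ => ?_
  have := hST e.1 e.2
  by_cases h₁ : e.1 ∈ S <;> by_cases h₂ : e.2 ∈ T <;> by_cases h : e.1 ⋖ e.2 <;> simp_all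

lemma sum_card_upperCovers_sub_one_add_card {s : Finset α} (hs : ∀ z, IsMax z → z ∈ s) :
    ∑ z ∈ s, (#(upperCovers z) - 1) + #s = ∑ z ∈ s, #(upperCovers z) + numMax α := by
  have hmax : numMax α = ∑ z ∈ s, if IsMax z then 1 else 0 := by
    rw [numMax, Nat.card_eq_fintype_card, Fintype.card_subtype, sum_boole, Nat.cast_id]
    congr 1
    ext z
    simpa using hs z
  rw [hmax, card_eq_sum_ones, ← sum_add_distrib, ← sum_add_distrib]
  refine sum_congr rfl fun z _ => ?_
  rw [← card_upperCovers_eq_zero_iff]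
  split_ifs <;> omega

lemma sum_card_lowerCovers_sub_one_add_card {s : Finset α} (hs : ∀ z, IsMin z → z ∈ s) :
    ∑ z ∈ s, (#(lowerCovers z) - 1) + #s = ∑ z ∈ s, #(lowerCovers z) + numMin α := by
  simpa [sum_map, card_upperCovers_toDual, numMax_orderDual] using
    sum_card_upperCovers_sub_one_add_card (s := s.map toDual.toEmbedding) (by simpa using hs)

end Counting

section Antichain

variable [PartialOrder α] {A : Set α}

lemma IsAntichain.eq_of_le_of_le (hA : IsAntichain (· ≤ ·) A) {a b z : α} (ha : a ∈ A)
    (hb : b ∈ A) (haz : a ≤ z) (hzb : z ≤ b) : z = a := by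
  obtain rfl := hA.eq ha hb (haz.trans hzb)
  exact le_antisymm hzb haz

lemma IsAntichain.notMem_lowerClosure_of_covBy (hA : IsAntichain (· ≤ ·) A) {x y : α}
    (hxy : x ⋖ y) (hx : x ∈ upperClosure A) : y ∉ lowerClosure A := by
  rintro ⟨b, hb, hyb⟩
  obtain ⟨a, ha, hax⟩ := hx
  have hx := hA.eq_of_le_of_le ha hb hax (hxy.le.trans hyb)
  have hy := hA.eq_of_le_of_le ha hb (hax.trans hxy.le) hyb
  exact hxy.ne (hx.trans hy.symm)

end Antichain

lemma card_upperClosure_add_card_lowerClosure [Fintype α] [PartialOrder α] {A : Finset α}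
    (hA : IsAntichain (· ≤ ·) (A : Set α)) (hmax : ∀ x, ∃ a ∈ A, x ≤ a ∨ a ≤ x) :
    #(upperClosure (A : Set α) : Set α).toFinset + #(lowerClosure (A : Set α) : Set α).toFinset =
      Fintype.card α + #A := by
  rw [← card_union_add_card_inter, ← card_univ]
  congr 2
  · ext z
    obtain ⟨a, ha, hza | haz⟩ := hmax z
    · simpa using .inr ⟨a, ha, hza⟩
    · simpa using .inl ⟨a, ha, haz⟩
  · ext z
    simp only [mem_inter, Set.mem_toFinset, SetLike.mem_coe, mem_upperClosure, mem_lowerClosure]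
    refine ⟨fun ⟨⟨a, ha, haz⟩, ⟨b, hb, hzb⟩⟩ => ?_, fun hz => ⟨⟨z, hz, le_rfl⟩, ⟨z, hz, le_rfl⟩⟩⟩
    exact hA.eq_of_le_of_le ha hb haz hzb ▸ ha

theorem gap_lower_bound (α : Type*) [Fintype α] [PartialOrder α] (A : Finset α)
    (hanti : IsAntichain (· ≤ ·) (A : Set α))
    (hmaxanti : ∀ x : α, ∃ a ∈ A, x ≤ a ∨ a ≤ x) :
    ∑ v ∈ A, ((uc v : ℤ) - 1) * ((dc v : ℤ) - 1) ≤ gap α := by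
  have hUp := card_add_sum_le_sum_uc (A := A) (U := (upperClosure (A : Set α) : Set α).toFinset)
    (by simp)
  have hDown := card_add_sum_le_sum_dc (A := A) (U := (lowerClosure (A : Set α) : Set α).toFinset)
    (by simp)
  have hChains := sum_dc_mul_uc_add_card_le_numMaxChains hanti hmaxanti
  have hEdges := numEdges_eq fun _ _ => hanti.notMem_lowerClosure_of_covBy
  have hCard := card_upperClosure_add_card_lowerClosure hanti hmaxanti
  have hMax := sum_card_upperCovers_sub_one_add_card
    (s := (upperClosure (A : Set α) : Set α).toFinset) fun z hz => by
      obtain ⟨a, ha, hza | haz⟩ := hmaxanti z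
      · simpa using ⟨a, ha, hz hza⟩
      · simpa using ⟨a, ha, haz⟩
  have hMin := sum_card_lowerCovers_sub_one_add_card
    (s := (lowerClosure (A : Set α) : Set α).toFinset) fun z hz => by
      obtain ⟨a, ha, hza | haz⟩ := hmaxanti z
      · simpa using ⟨a, ha, hza⟩
      · simpa using ⟨a, ha, hz haz⟩
  have hExpand : ∑ v ∈ A, ((uc v : ℤ) - 1) * ((dc v : ℤ) - 1) =
      ((∑ a ∈ A, dc a * uc a : ℕ) : ℤ) - (∑ a ∈ A, uc a : ℕ) - (∑ a ∈ A, dc a : ℕ) + #A := by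
    push_cast
    rw [card_eq_sum_ones, Nat.cast_sum, ← sum_sub_distrib, ← sum_sub_distrib, ← sum_add_distrib]
    exact sum_congr rfl fun _ _ => by push_cast; ring
  rw [hExpand, gap, Nat.card_eq_fintype_card]
  omega
end

section
/- Let P be a finite poset with at least one element v satisfying uc(v) ≥ 2 and dc(v) ≥ 2 (i.e., P contains an X-shaped subposet). Then gap(P) = c(P) + |P| - (max(P) + min(P) + edges(P)) ≥ 1. -/
open Classical

variable {α : Type*}

/-!
Fix a lower cover of every non-minimal element and an upper cover of every non-maximal one; this
makes the Hasse diagram into two spanning forests, rooted at the minimal and at the maximal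
elements. All but `|P| - min(P)` cover relations are non-edges of the lower forest. Each such
`u ⋖ w`, and each maximal element `m`, yields a maximal chain: down the lower forest from `u`
(resp. `m`), up the upper forest from `w`. These chains are distinct, because `u ⋖ w` is the first
step of its chain outside the lower forest, so `c(P) ≥ max(P) + edges(P) - |P| + min(P)`. If
`uc(v), dc(v) ≥ 2`, a maximal chain through `v` that differs from the lower forest below `v` and
from the upper forest above `v` is none of them, which gives the missing `1`.
-/

theorem Nat.card_lt_card_of_injective_of_notMem {β γ : Type*} [Finite γ] (f : β → γ)
    (hf : Function.Injective f) {c : γ} (hc : c ∉ Set.range f) : Nat.card β < Nat.card γ := by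
  have := Fintype.ofFinite γ
  have := Fintype.ofInjective f hf
  simpa only [Nat.card_eq_fintype_card] using Fintype.card_lt_of_injective_of_notMem f hf hc

theorem Nat.exists_ne_of_two_le_card_subtype {β : Type*} {P : β → Prop}
    (h : 2 ≤ Nat.card {x // P x}) (a : β) : ∃ x, P x ∧ x ≠ a := by
  have := Nat.finite_of_card_ne_zero (α := {x // P x}) (by omega)
  obtain ⟨x, y, hxy⟩ := Finite.one_lt_card_iff_nontrivial.1 h
  by_cases hx : x.1 = a
  · exact ⟨y, y.2, fun hy => hxy (Subtype.ext (hx.trans hy.symm))⟩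
  · exact ⟨x, x.2, hx⟩

namespace List

variable {β : Type*} {R : β → β → Prop}

theorem IsChain.eq_of_rightUnique (hR : Relator.RightUnique R) :
    ∀ {l₁ l₂ : List β}, l₁.IsChain R → l₂.IsChain R → l₁.head? = l₂.head? →
      (∀ x ∈ l₁.getLast?, ∀ y, ¬ R x y) → (∀ x ∈ l₂.getLast?, ∀ y, ¬ R x y) → l₁ = l₂
  | [], _, _, _, h, _, _ => (head?_eq_none_iff.1 h.symm).symm
  | [_], [_], _, _, h, _, _ => by simpa using h
  | [a], _ :: c :: _, _, h₂, h, e₁, _ => by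
    obtain rfl : a = _ := by simpa using h
    exact absurd (isChain_cons_cons.1 h₂).1 (e₁ a rfl c)
  | _ :: b :: _, [a], h₁, _, h, _, e₂ => by
    obtain rfl : _ = a := by simpa using h
    exact absurd (isChain_cons_cons.1 h₁).1 (e₂ _ rfl b)
  | _ :: _, [], _, _, h, _, _ => by simp at h
  | a :: b :: l₁, a' :: c :: l₂, h₁, h₂, h, e₁, e₂ => by
    obtain rfl : a = a' := by simpa using h
    obtain ⟨hab, h₁⟩ := isChain_cons_cons.1 h₁
    obtain ⟨hac, h₂⟩ := isChain_cons_cons.1 h₂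
    rw [IsChain.eq_of_rightUnique hR h₁ h₂ (by simp [hR hab hac]) (by simpa using e₁)
      (by simpa using e₂)]

end List

section PartialOrder

variable [PartialOrder α]

theorem isMaxChainList_append {u w : α} {d l : List α} (hd : DownChain u d) (hl : UpChain w l)
    (h : u ⋖ w) : IsMaxChainList (d ++ l) := by
  obtain ⟨hdc, ⟨m, hm, hmin⟩, hdl⟩ := hd
  obtain ⟨hlc, hlh, m', hm', hmax⟩ := hl
  refine ⟨List.IsChain.append hdc hlc (by simp [hdl, hlh, h]), ⟨m, ?_, hmin⟩, m', ?_, hmax⟩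
  · simp [List.head?_append, hm]
  · simp [List.getLast?_append, hm']

theorem UpChain.exists_cons {v : α} {l : List α} (hl : UpChain v l) (hv : l ≠ [v]) :
    ∃ w t, l = v :: t ∧ v ⋖ w ∧ UpChain w t := by
  obtain ⟨hc, hh, m, hm, hmax⟩ := hl
  obtain ⟨_ | ⟨w, t⟩, rfl⟩ := List.head?_eq_some_iff.1 hh
  · exact absurd rfl hv
  · obtain ⟨hvw, hc⟩ := List.isChain_cons_cons.1 hc
    exact ⟨w, w :: t, rfl, hvw, hc, rfl, m, by simpa using hm, hmax⟩

instance [Finite α] : Finite {l : List α // IsMaxChainList l} :=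
  Set.Finite.to_subtype <| (List.finite_length_le α (Nat.card α)).subset fun _ hl =>
    (List.isChain_iff_pairwise.1 (hl.1.imp fun _ _ h => h.lt)).nodup.length_le_natCard

end PartialOrder

section Finite

variable [PartialOrder α] [Finite α]

noncomputable def lowerCover (w : α) : α :=
  if h : IsMin w then w else (exists_covBy_of_wellFoundedGT h).choose

noncomputable def upperCover (w : α) : α :=
  if h : IsMax w then w else (exists_covBy_of_wellFoundedLT h).choose

theorem lowerCover_covBy {w : α} (h : ¬ IsMin w) : lowerCover w ⋖ w := by
  rw [lowerCover, dif_neg h]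
  exact (exists_covBy_of_wellFoundedGT h).choose_spec

theorem covBy_upperCover {w : α} (h : ¬ IsMax w) : w ⋖ upperCover w := by
  rw [upperCover, dif_neg h]
  exact (exists_covBy_of_wellFoundedLT h).choose_spec

def IsLowerTreeEdge (a b : α) : Prop := a ⋖ b ∧ lowerCover b = a

def IsUpperTreeEdge (a b : α) : Prop := a ⋖ b ∧ upperCover a = b

theorem exists_downChain_isChain_lowerTreeEdge (u : α) :
    ∃ l, DownChain u l ∧ l.IsChain IsLowerTreeEdge := by
  induction u using WellFoundedLT.induction with
  | _ u ih =>
  by_cases hu : IsMin u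
  · exact ⟨[u], ⟨.singleton u, ⟨u, rfl, hu⟩, rfl⟩, .singleton u⟩
  · obtain ⟨l, ⟨hc, hmin, hlast⟩, ht⟩ := ih _ (lowerCover_covBy hu).lt
    have hedge : ∀ x ∈ l.getLast?, ∀ y ∈ [u].head?, IsLowerTreeEdge x y := by
      simpa [hlast] using ⟨lowerCover_covBy hu, rfl⟩
    refine ⟨l ++ [u], ⟨hc.append (.singleton u) fun x hx y hy => (hedge x hx y hy).1, ?_, by simp⟩,
      ht.append (.singleton u) hedge⟩
    obtain ⟨m, hm, hmin⟩ := hmin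
    exact ⟨m, by simp [List.head?_append, hm], hmin⟩

theorem exists_upChain_isChain_upperTreeEdge (u : α) :
    ∃ l, UpChain u l ∧ l.IsChain IsUpperTreeEdge := by
  induction u using WellFoundedGT.induction with
  | _ u ih =>
  by_cases hu : IsMax u
  · exact ⟨[u], ⟨.singleton u, rfl, u, rfl, hu⟩, .singleton u⟩
  · obtain ⟨l, ⟨hc, hhead, hmax⟩, ht⟩ := ih _ (covBy_upperCover hu).lt
    have hedge : ∀ y ∈ l.head?, IsUpperTreeEdge u y := by
      simpa [hhead] using ⟨covBy_upperCover hu, rfl⟩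
    refine ⟨u :: l, ⟨hc.cons fun y hy => (hedge y hy).1, rfl, ?_⟩, ht.cons hedge⟩
    obtain ⟨m, hm, hmax⟩ := hmax
    exact ⟨m, by simp [List.getLast?_cons, hm], hmax⟩

noncomputable def downPath (u : α) : List α := (exists_downChain_isChain_lowerTreeEdge u).choose

noncomputable def upPath (u : α) : List α := (exists_upChain_isChain_upperTreeEdge u).choose

theorem downChain_downPath (u : α) : DownChain u (downPath u) :=
  (exists_downChain_isChain_lowerTreeEdge u).choose_spec.1

theorem isChain_downPath (u : α) : (downPath u).IsChain IsLowerTreeEdge :=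
  (exists_downChain_isChain_lowerTreeEdge u).choose_spec.2

theorem upChain_upPath (u : α) : UpChain u (upPath u) :=
  (exists_upChain_isChain_upperTreeEdge u).choose_spec.1

theorem isChain_upPath (u : α) : (upPath u).IsChain IsUpperTreeEdge :=
  (exists_upChain_isChain_upperTreeEdge u).choose_spec.2

theorem eq_downPath {u : α} {l : List α} (hl : DownChain u l) (ht : l.IsChain IsLowerTreeEdge) :
    l = downPath u := by
  have key : ∀ {l : List α}, DownChain u l → l.IsChain IsLowerTreeEdge →
      l.reverse.IsChain (fun a b => IsLowerTreeEdge b a) ∧ l.reverse.head? = some u ∧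
        ∀ x ∈ l.reverse.getLast?, ∀ y, ¬ IsLowerTreeEdge y x := by
    rintro l ⟨-, ⟨m, hm, hmin⟩, hlast⟩ ht
    refine ⟨List.isChain_reverse.2 ht, by simpa using hlast, ?_⟩
    simp only [List.getLast?_reverse, hm, Option.mem_def, Option.some_inj, forall_eq']
    exact fun y hy => hmin.not_lt hy.1.lt
  obtain ⟨h₁, hh₁, e₁⟩ := key hl ht
  obtain ⟨h₂, hh₂, e₂⟩ := key (downChain_downPath u) (isChain_downPath u)
  have hR : Relator.RightUnique fun a b : α => IsLowerTreeEdge b a :=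
    fun _ _ _ h h' => h.2.symm.trans h'.2
  exact List.reverse_injective (h₁.eq_of_rightUnique hR h₂ (hh₁.trans hh₂.symm) e₁ e₂)

theorem eq_upPath {u : α} {l : List α} (hl : UpChain u l) (ht : l.IsChain IsUpperTreeEdge) :
    l = upPath u := by
  have key : ∀ {l : List α}, UpChain u l → ∀ x ∈ l.getLast?, ∀ y, ¬ IsUpperTreeEdge x y := by
    rintro l ⟨-, -, m, hm, hmax⟩
    simp only [hm, Option.mem_def, Option.some_inj, forall_eq']
    exact fun y hy => hmax.not_lt hy.1.lt
  have hR : Relator.RightUnique (IsUpperTreeEdge (α := α)) :=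
    fun _ _ _ h h' => h.2.symm.trans h'.2
  exact ht.eq_of_rightUnique hR (isChain_upPath u)
    (hl.2.1.trans (upChain_upPath u).2.1.symm) (key hl) (key (upChain_upPath u))

theorem downPath_injective : Function.Injective (downPath (α := α)) := fun u u' h => by
  simpa [h, (downChain_downPath u').2.2, eq_comm] using (downChain_downPath u).2.2

theorem upPath_injective : Function.Injective (upPath (α := α)) := fun u u' h => by
  simpa [h, (upChain_upPath u').2.1, eq_comm] using (upChain_upPath u).2.1

theorem eq_downPath_of_downPath_eq_append {v x : α} {d a : List α} (hd : DownChain v d)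
    (h : downPath x = d ++ a) : d = downPath v :=
  eq_downPath hd (h ▸ isChain_downPath x).left_of_append

theorem eq_upPath_of_upPath_eq_append {v x : α} {c l : List α} (hl : UpChain v l)
    (h : upPath x = c ++ l) : l = upPath v :=
  eq_upPath hl (h ▸ isChain_upPath x).right_of_append

theorem isLowerTreeEdge_of_downPath_eq_append {x u w : α} {s : List α}
    (h : downPath x = downPath u ++ w :: s) : IsLowerTreeEdge u w :=
  (List.isChain_append.1 (h ▸ isChain_downPath x)).2.2 u (downChain_downPath u).2.2 w rfl

/-- `downPath u ++ upPath w` follows the lower forest exactly up to `u`. -/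
theorem eq_nil_of_downPath_eq_append {x u w : α} {a s : List α} (hw : ¬ IsLowerTreeEdge u w)
    (hd : downPath x = downPath u ++ a) (hu : upPath w = a ++ s) : a = [] := by
  rcases a with _ | ⟨b, a⟩
  · rfl
  · obtain rfl : b = w := by simpa [hu] using (upChain_upPath w).2.1
    exact absurd (isLowerTreeEdge_of_downPath_eq_append hd) hw

theorem eq_of_downPath_append_upPath_eq {u w u' w' : α} (hw : ¬ IsLowerTreeEdge u w)
    (hw' : ¬ IsLowerTreeEdge u' w') (h : downPath u ++ upPath w = downPath u' ++ upPath w') :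
    u = u' ∧ w = w' := by
  rcases List.append_eq_append_iff.1 h with ⟨a, hd, hu⟩ | ⟨a, hd, hu⟩
  · obtain rfl := eq_nil_of_downPath_eq_append hw hd hu
    simp only [List.append_nil, List.nil_append] at hd hu
    exact ⟨downPath_injective hd.symm, upPath_injective hu⟩
  · obtain rfl := eq_nil_of_downPath_eq_append hw' hd hu
    simp only [List.append_nil, List.nil_append] at hd hu
    exact ⟨downPath_injective hd, upPath_injective hu.symm⟩

theorem downPath_ne_downPath_append_upPath {m u w : α} (hw : ¬ IsLowerTreeEdge u w) :
    downPath m ≠ downPath u ++ upPath w := fun h => by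
  simpa [eq_nil_of_downPath_eq_append hw h (List.append_nil _).symm] using
    (upChain_upPath w).2.1

noncomputable def canonicalChain :
    {p : α × α // p.1 ⋖ p.2 ∧ ¬ IsLowerTreeEdge p.1 p.2} ⊕ {m : α // IsMax m} →
      {l : List α // IsMaxChainList l}
  | .inl p => ⟨downPath p.1.1 ++ upPath p.1.2,
      isMaxChainList_append (downChain_downPath _) (upChain_upPath _) p.2.1⟩
  | .inr m => ⟨downPath m.1, (downChain_downPath m.1).1, (downChain_downPath m.1).2.1, m.1,
      (downChain_downPath m.1).2.2, m.2⟩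

theorem canonicalChain_injective : Function.Injective (canonicalChain (α := α)) := by
  rintro (⟨⟨u, w⟩, huw, hw⟩ | ⟨m, hm⟩) (⟨⟨u', w'⟩, huw', hw'⟩ | ⟨m', hm'⟩) h <;>
    replace h := congrArg Subtype.val h <;> simp only [canonicalChain] at h
  · obtain ⟨rfl, rfl⟩ := eq_of_downPath_append_upPath_eq hw hw' h
    rfl
  · exact absurd h.symm (downPath_ne_downPath_append_upPath hw)
  · exact absurd h (downPath_ne_downPath_append_upPath hw')
  · obtain rfl := downPath_injective h
    rfl

theorem canonicalChain_ne {v : α} {d t : List α} (hd : DownChain v d) (hd' : d ≠ downPath v)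
    (ht : UpChain v (v :: t)) (ht' : v :: t ≠ upPath v) :
    ∀ x, (canonicalChain x).1 ≠ d ++ t := by
  intro x
  rcases x with ⟨⟨u, w⟩, -, -⟩ | ⟨m, -⟩
  · intro h
    rcases List.append_eq_append_iff.1 h.symm with ⟨a, hd'', -⟩ | ⟨c, hc, hu⟩
    · exact hd' (eq_downPath_of_downPath_eq_append hd hd'')
    rcases eq_or_ne c [] with rfl | hc'
    · exact hd' (eq_downPath_of_downPath_eq_append (x := u) (a := []) hd (by simp [hc]))
    · have hcv : c.getLast? = some v := by simpa [hc, List.getLast?_append, hc'] using hd.2.2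
      rw [← List.dropLast_append_getLast? v hcv, List.append_assoc] at hu
      exact ht' (eq_upPath_of_upPath_eq_append ht hu)
  · exact fun h => hd' (eq_downPath_of_downPath_eq_append hd h)

theorem card_add_numMax_lt_numMaxChains {v : α} (huc : 2 ≤ uc v) (hdc : 2 ≤ dc v) :
    Nat.card {p : α × α // p.1 ⋖ p.2 ∧ ¬ IsLowerTreeEdge p.1 p.2} + numMax α <
      numMaxChains α := by
  obtain ⟨d, hd, hd'⟩ := Nat.exists_ne_of_two_le_card_subtype hdc (downPath v)
  obtain ⟨l, hl, hl'⟩ := Nat.exists_ne_of_two_le_card_subtype huc (upPath v)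
  obtain ⟨w, t, rfl, hvw, ht⟩ :=
    hl.exists_cons fun h => hl' (eq_upPath hl (h ▸ List.isChain_singleton v))
  rw [numMax, ← Nat.card_sum]
  refine Nat.card_lt_card_of_injective_of_notMem _ canonicalChain_injective
    (c := ⟨d ++ t, isMaxChainList_append hd ht hvw⟩) ?_
  rintro ⟨x, hx⟩
  exact canonicalChain_ne hd hd' hl hl' x (congrArg Subtype.val hx)

theorem card_covBy_le :
    Nat.card {p : α × α // p.1 ⋖ p.2} ≤
      Nat.card {w : α // ¬ IsMin w} +
        Nat.card {p : α × α // p.1 ⋖ p.2 ∧ ¬ IsLowerTreeEdge p.1 p.2} := by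
  rw [← Nat.card_sum]
  refine Nat.card_le_card_of_injective (fun p => if h : IsLowerTreeEdge p.1.1 p.1.2
    then .inl ⟨p.1.2, fun hmin => hmin.not_lt p.2.lt⟩ else .inr ⟨p.1, p.2, h⟩) ?_
  rintro ⟨⟨u, w⟩, huw⟩ ⟨⟨u', w'⟩, huw'⟩ h
  by_cases hT : IsLowerTreeEdge u w <;> by_cases hT' : IsLowerTreeEdge u' w' <;>
    simp only [hT, hT', dite_true, dite_false, reduceCtorEq, Sum.inl.injEq, Sum.inr.injEq,
      Subtype.mk.injEq] at h
  · exact Subtype.ext (Prod.ext (hT.2.symm.trans (h ▸ hT'.2)) h)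
  · exact Subtype.ext h

end Finite

theorem gap_ge_one_of_crossing (α : Type*) [Fintype α] [PartialOrder α]
    (v : α) (huc : 2 ≤ uc v) (hdc : 2 ≤ dc v) :
    1 ≤ gap α := by
  have hcard : numMin α + Nat.card {w : α // ¬ IsMin w} = Nat.card α := by
    rw [numMin, ← Nat.card_sum]
    exact Nat.card_congr (Equiv.sumCompl _)
  have hedges := card_covBy_le (α := α)
  have hchains := card_add_numMax_lt_numMaxChains huc hdc
  rw [gap, numEdges]
  omega
end
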